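/- For every m ≥ 1 and every tuple (ω_1, ..., ω_m) ∈ {0,1}^m, there exist nonnegative integers n and t such that for every ℓ with 1 ≤ ℓ ≤ m, the Thue–Morse value t_{n+ℓt} = s_2(n + ℓ·t) mod 2 equals ω_ℓ; that is, every finite 0-1 word occurs as an arithmetic subsequence of the Thue–Morse sequence. -/

import Mathlib

def s2 (n : ℕ) : ℕ := (Nat.digits 2 n).sum

lemma s2_zero : s2 0 = 0 := by simp [s2]

lemma s2_div2 (x : ℕ) : s2 x = x % 2 + s2 (x / 2) := by
  rcases eq_or_ne x 0 with rfl | h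
  · simp [s2_zero]
  · unfold s2
    rw [Nat.digits_def' (by norm_num : (1:ℕ) < 2) (Nat.pos_of_ne_zero h)]
    simp

lemma s2_bit (r z : ℕ) (h : r < 2) : s2 (r + 2 * z) = r + s2 z := by
  have h1 : (r + 2 * z) % 2 = r := by omega
  have h2 : (r + 2 * z) / 2 = z := by omega
  rw [s2_div2 (r + 2 * z), h1, h2]

lemma s2_add_pow_mul : ∀ (W x y : ℕ), x < 2 ^ W → s2 (x + 2 ^ W * y) = s2 x + s2 y := by
  intro W
  induction W with
  | zero => intro x y hx; interval_cases x; simp [s2_zero]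
  | succ W ih =>
    intro x y hx
    have hp : (2:ℕ) ^ (W+1) = 2 * 2 ^ W := by ring
    have h1 : x + 2 ^ (W+1) * y = x % 2 + 2 * (x / 2 + 2 ^ W * y) := by
      rw [hp, mul_assoc]; omega
    rw [h1, s2_bit _ _ (by omega), ih (x/2) y (by omega), s2_div2 x]
    ring

lemma s2_compl : ∀ (e x : ℕ), x < 2 ^ e → s2 (2 ^ e - 1 - x) + s2 x = e := by
  intro e
  induction e with
  | zero => intro x hx; interval_cases x; simp [s2_zero]
  | succ e ih =>
    intro x hx
    have hp : (2:ℕ) ^ (e+1) = 2 * 2 ^ e := by ring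
    have hA : 2 ^ (e+1) - 1 - x = (1 - x % 2) + 2 * (2 ^ e - 1 - x / 2) := by
      rw [hp] at hx ⊢; omega
    rw [hA, s2_bit _ _ (by omega), s2_div2 x]
    have := ih (x/2) (by rw [hp] at hx; omega)
    omega

lemma s2_one : s2 1 = 1 := by
  have := s2_bit 1 0 (by norm_num); simpa [s2_zero] using this

lemma pair_parity (K m p ℓ d : ℕ) (hK : m + 1 < 2 ^ K) (hp : p ≤ m)
    (hℓ1 : 1 ≤ ℓ) (hℓm : ℓ ≤ m) (hd : d ≤ 1) :
    (s2 (d * (2 ^ K - (p+1)) + ℓ) + s2 (d * (2 ^ (K+1) - (p+1)) + ℓ)) % 2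
      = (d * (if ℓ ≤ p then 1 else 0)) % 2 := by
  interval_cases d
  · simp; omega
  · have hK2 : (2:ℕ) ^ (K+1) = 2 * 2 ^ K := by ring
    simp only [one_mul]
    by_cases hlp : ℓ ≤ p
    · have e1 : 2 ^ K - (p+1) + ℓ = 2 ^ K - 1 - (p - ℓ) := by omega
      have e2 : 2 ^ (K+1) - (p+1) + ℓ = 2 ^ (K+1) - 1 - (p - ℓ) := by
        rw [hK2]; omega
      have h1 := s2_compl K (p - ℓ) (by omega)
      have h2 := s2_compl (K+1) (p - ℓ) (by rw [hK2]; omega)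
      rw [e1, e2, if_pos hlp]
      omega
    · have e1 : 2 ^ K - (p+1) + ℓ = (ℓ - p - 1) + 2 ^ K * 1 := by omega
      have e2 : 2 ^ (K+1) - (p+1) + ℓ = (ℓ - p - 1) + 2 ^ (K+1) * 1 := by
        rw [hK2]; omega
      have h1 := s2_add_pow_mul K (ℓ - p - 1) 1 (by omega)
      have h2 := s2_add_pow_mul (K+1) (ℓ - p - 1) 1 (by rw [hK2]; omega)
      rw [e1, e2, if_neg hlp, h1, h2, s2_one]
      omega

lemma main_blocks (m K : ℕ) (hK : m + 1 < 2 ^ K) (δ : ℕ → ℕ) (hδ : ∀ p, δ p ≤ 1) :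
    ∀ j, j ≤ m → ∃ n t : ℕ, n + m * t < 2 ^ ((K+2) * (2*j)) ∧
      ∀ ℓ, 1 ≤ ℓ → ℓ ≤ m → s2 (n + ℓ * t) % 2
        = (∑ p ∈ Finset.Icc 1 j, δ p * (if ℓ ≤ p then 1 else 0)) % 2 := by
  intro j
  induction j with
  | zero =>
    intro _
    exact ⟨0, 0, by norm_num, fun ℓ h1 h2 => by simp [s2_zero]⟩
  | succ j ih =>
    intro hj
    obtain ⟨n, t, hb, hs⟩ := ih (by omega)
    have hd1 : δ (j+1) ≤ 1 := hδ (j+1)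
    have hK1 : (2:ℕ) ^ (K+1) = 2 ^ K * 2 := by ring
    have hKW : (2:ℕ) ^ (K+2) = 2 ^ K * 2 * 2 := by ring
    have hamul : δ (j+1) * (2 ^ K - (j+1+1)) ≤ 2 ^ K - (j+1+1) := by
      calc δ (j+1) * (2 ^ K - (j+1+1)) ≤ 1 * (2 ^ K - (j+1+1)) :=
            Nat.mul_le_mul_right _ hd1
        _ = 2 ^ K - (j+1+1) := one_mul _
    have hbmul : δ (j+1) * (2 ^ (K+1) - (j+1+1)) ≤ 2 ^ (K+1) - (j+1+1) := by
      calc δ (j+1) * (2 ^ (K+1) - (j+1+1)) ≤ 1 * (2 ^ (K+1) - (j+1+1)) :=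
            Nat.mul_le_mul_right _ hd1
        _ = 2 ^ (K+1) - (j+1+1) := one_mul _
    have haW : ∀ l, l ≤ m → δ (j+1) * (2 ^ K - (j+1+1)) + l < 2 ^ (K+2) := by
      intro l hl; rw [hKW]; omega
    have hbW : ∀ l, l ≤ m → δ (j+1) * (2 ^ (K+1) - (j+1+1)) + l < 2 ^ (K+2) := by
      intro l hl; rw [hKW]; omega
    refine ⟨n + 2 ^ ((K+2)*(2*j)) * (δ (j+1) * (2 ^ K - (j+1+1))
              + 2 ^ (K+2) * (δ (j+1) * (2 ^ (K+1) - (j+1+1)))),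
            t + 2 ^ ((K+2)*(2*j)) * (1 + 2 ^ (K+2) * 1), ?_, ?_⟩
    · -- bound
      have h1 : δ (j+1) * (2 ^ K - (j+1+1)) + m < 2 ^ (K+2) := haW m le_rfl
      have h2 : δ (j+1) * (2 ^ (K+1) - (j+1+1)) + m < 2 ^ (K+2) := hbW m le_rfl
      have key : (δ (j+1) * (2 ^ K - (j+1+1)) + m)
          + 2 ^ (K+2) * (δ (j+1) * (2 ^ (K+1) - (j+1+1)) + m) + 1
          ≤ 2 ^ (K+2) * 2 ^ (K+2) := by
        have h3 : 2 ^ (K+2) * (δ (j+1) * (2 ^ (K+1) - (j+1+1)) + m) + 2 ^ (K+2)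
            ≤ 2 ^ (K+2) * 2 ^ (K+2) := by
          calc 2 ^ (K+2) * (δ (j+1) * (2 ^ (K+1) - (j+1+1)) + m) + 2 ^ (K+2)
              = 2 ^ (K+2) * ((δ (j+1) * (2 ^ (K+1) - (j+1+1)) + m) + 1) := by ring
            _ ≤ 2 ^ (K+2) * 2 ^ (K+2) := Nat.mul_le_mul_left _ (by omega)
        omega
      have expand : n + 2 ^ ((K+2)*(2*j)) * (δ (j+1) * (2 ^ K - (j+1+1))
              + 2 ^ (K+2) * (δ (j+1) * (2 ^ (K+1) - (j+1+1))))
              + m * (t + 2 ^ ((K+2)*(2*j)) * (1 + 2 ^ (K+2) * 1))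
          = (n + m * t) + 2 ^ ((K+2)*(2*j)) * ((δ (j+1) * (2 ^ K - (j+1+1)) + m)
              + 2 ^ (K+2) * (δ (j+1) * (2 ^ (K+1) - (j+1+1)) + m)) := by ring
      have pow_eq : (2:ℕ) ^ ((K+2) * (2*(j+1)))
          = 2 ^ ((K+2)*(2*j)) * (2 ^ (K+2) * 2 ^ (K+2)) := by
        rw [← pow_add, ← pow_add]; ring_nf
      rw [expand, pow_eq]
      have h4 : 2 ^ ((K+2)*(2*j)) * ((δ (j+1) * (2 ^ K - (j+1+1)) + m)
              + 2 ^ (K+2) * (δ (j+1) * (2 ^ (K+1) - (j+1+1)) + m)) + 2 ^ ((K+2)*(2*j))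
          ≤ 2 ^ ((K+2)*(2*j)) * (2 ^ (K+2) * 2 ^ (K+2)) := by
        calc 2 ^ ((K+2)*(2*j)) * ((δ (j+1) * (2 ^ K - (j+1+1)) + m)
                + 2 ^ (K+2) * (δ (j+1) * (2 ^ (K+1) - (j+1+1)) + m)) + 2 ^ ((K+2)*(2*j))
            = 2 ^ ((K+2)*(2*j)) * ((δ (j+1) * (2 ^ K - (j+1+1)) + m)
                + 2 ^ (K+2) * (δ (j+1) * (2 ^ (K+1) - (j+1+1)) + m) + 1) := by ring
          _ ≤ 2 ^ ((K+2)*(2*j)) * (2 ^ (K+2) * 2 ^ (K+2)) := Nat.mul_le_mul_left _ key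
      omega
    · -- parity
      intro ℓ h1 h2
      have expand : n + 2 ^ ((K+2)*(2*j)) * (δ (j+1) * (2 ^ K - (j+1+1))
              + 2 ^ (K+2) * (δ (j+1) * (2 ^ (K+1) - (j+1+1))))
              + ℓ * (t + 2 ^ ((K+2)*(2*j)) * (1 + 2 ^ (K+2) * 1))
          = (n + ℓ * t) + 2 ^ ((K+2)*(2*j)) * ((δ (j+1) * (2 ^ K - (j+1+1)) + ℓ)
              + 2 ^ (K+2) * (δ (j+1) * (2 ^ (K+1) - (j+1+1)) + ℓ)) := by ring
      have hxb : n + ℓ * t < 2 ^ ((K+2)*(2*j)) := by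
        have : ℓ * t ≤ m * t := Nat.mul_le_mul_right t h2
        omega
      rw [expand, s2_add_pow_mul ((K+2)*(2*j)) _ _ hxb,
          s2_add_pow_mul (K+2) _ _ (haW ℓ h2)]
      have hpair := pair_parity K m (j+1) ℓ (δ (j+1)) hK (by omega) h1 h2 hd1
      have hsum := Finset.sum_Icc_succ_top (by omega : 1 ≤ j + 1)
        (fun p => δ p * (if ℓ ≤ p then 1 else 0))
      rw [hsum]
      have hih := hs ℓ h1 h2
      omega

theorem stmt_19 (m : ℕ) (hm : 1 ≤ m) (ω : ℕ → ℕ)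
    (hω : ∀ ℓ : ℕ, 1 ≤ ℓ → ℓ ≤ m → ω ℓ = 0 ∨ ω ℓ = 1) :
    ∃ n t : ℕ, ∀ ℓ : ℕ, 1 ≤ ℓ → ℓ ≤ m →
      s2 (n + ℓ * t) % 2 = ω ℓ := by
  set δ : ℕ → ℕ := fun p => if p = m then ω m % 2 else (ω p + ω (p+1)) % 2 with hδdef
  have hδ1 : ∀ p, δ p ≤ 1 := by
    intro p
    simp only [hδdef]
    split <;> omega
  -- telescoping: the tail sums of δ recover ω
  have tele : ∀ k ℓ, 1 ≤ ℓ → ℓ ≤ m → m - ℓ = k →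
      (∑ p ∈ Finset.Icc ℓ m, δ p) % 2 = ω ℓ := by
    intro k
    induction k with
    | zero =>
      intro ℓ h1 h2 hk
      have : ℓ = m := by omega
      subst this
      rw [Finset.Icc_self, Finset.sum_singleton]
      have := hω ℓ h1 h2
      simp only [hδdef, if_pos rfl]
      omega
    | succ k ih =>
      intro ℓ h1 h2 hk
      have hlm : ℓ < m := by omega
      have hins : Finset.Icc ℓ m = insert ℓ (Finset.Icc (ℓ+1) m) := by
        ext x
        simp only [Finset.mem_Icc, Finset.mem_insert]
        omega
      rw [hins, Finset.sum_insert (by simp)]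
      have hrest := ih (ℓ+1) (by omega) (by omega) (by omega)
      have hδℓ : δ ℓ = (ω ℓ + ω (ℓ+1)) % 2 := by
        simp only [hδdef, if_neg (by omega : ℓ ≠ m)]
      have hω1 := hω ℓ h1 h2
      have hω2 := hω (ℓ+1) (by omega) (by omega)
      omega
  -- parameters
  have hK : m + 1 < 2 ^ (m + 2) := by
    have h1 : m + 1 < 2 ^ (m + 1) := Nat.lt_two_pow_self (n := m + 1)
    have h2 : (2:ℕ) ^ (m + 1) ≤ 2 ^ (m + 2) := Nat.pow_le_pow_right (by norm_num) (by omega)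
    omega
  obtain ⟨n, t, _, hs⟩ := main_blocks m (m + 2) hK δ hδ1 m le_rfl
  refine ⟨n, t, fun ℓ h1 h2 => ?_⟩
  rw [hs ℓ h1 h2]
  -- the indicator sum over Icc 1 m equals the tail sum over Icc ℓ m
  have hsubset : Finset.Icc ℓ m ⊆ Finset.Icc 1 m := by
    intro x hx
    rw [Finset.mem_Icc] at *
    omega
  have hzero : ∀ x ∈ Finset.Icc 1 m, x ∉ Finset.Icc ℓ m →
      δ x * (if ℓ ≤ x then 1 else 0) = 0 := by
    intro x hx hnx
    rw [Finset.mem_Icc] at hx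
    have hc : ¬ ℓ ≤ x := fun hc => hnx (Finset.mem_Icc.mpr ⟨hc, hx.2⟩)
    rw [if_neg hc, mul_zero]
  have hsub : ∑ p ∈ Finset.Icc 1 m, δ p * (if ℓ ≤ p then 1 else 0)
      = ∑ p ∈ Finset.Icc ℓ m, δ p := by
    rw [← Finset.sum_subset hsubset hzero]
    exact Finset.sum_congr rfl (fun x hx => by
      rw [Finset.mem_Icc] at hx
      rw [if_pos hx.1, mul_one])
  rw [hsub]
  exact tele (m - ℓ) ℓ h1 h2 rfl
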